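/- arXiv:1910.00172 — 9 statements merged into one kernel-verified Lean document; each statement's English description precedes it below -/
import Mathlib

section
/- Semi-discrete energy dissipation (Theorem 2.1, abstract form): suppose u, q : ℝ → V are differentiable curves such that for every t ∈ ℝ and all φ, ψ ∈ V one has ⟨u'(t), φ⟩ + b(u(t), φ) = −A(φ, q(t)) − ⟨∇F(u(t)), φ⟩ and ⟨q(t), ψ⟩ = A(u(t), ψ). Then the energy t ↦ E(t) := (1/2)‖q(t)‖² + F(u(t)) + (1/2) b(u(t), u(t)) is differentiable and satisfies E'(t) = −‖u'(t)‖² ≤ 0 for every t. -/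
/-!
Differentiate the auxiliary equation `⟨q, ψ⟩ = A(u, ψ)` in time to get `⟨q', ψ⟩ = A(u', ψ)`.
The chain rule gives `E' = ⟨q, q'⟩ + ⟨∇F(u), u'⟩ + b(u, u')`, and `⟨q, q'⟩ = A(u', q)`; testing
the primal equation with `φ = u'` turns this sum into `-‖u'‖²`.
-/

open scoped RealInnerProductSpace

theorem LinearMap.hasDerivAt_apply₂
    {𝕜 : Type*} [NontriviallyNormedField 𝕜] [CompleteSpace 𝕜]
    {E F G : Type*} [NormedAddCommGroup E] [NormedSpace 𝕜 E] [FiniteDimensional 𝕜 E]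
    [NormedAddCommGroup F] [NormedSpace 𝕜 F] [FiniteDimensional 𝕜 F]
    [NormedAddCommGroup G] [NormedSpace 𝕜 G]
    (B : E →ₗ[𝕜] F →ₗ[𝕜] G) {u : 𝕜 → E} {v : 𝕜 → F} {u' : E} {v' : F} {t : 𝕜}
    (hu : HasDerivAt u u' t) (hv : HasDerivAt v v' t) :
    HasDerivAt (fun s => B (u s) (v s)) (B (u t) v' + B u' (v t)) t :=
  B.toContinuousBilinearMap.hasDerivAt_of_bilinear (fun _ => hu) (fun _ => hv)

theorem inner_eq_of_hasDerivAt_of_forall_inner_eq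
    {V W : Type*} [NormedAddCommGroup V] [InnerProductSpace ℝ V] [FiniteDimensional ℝ V]
    [NormedAddCommGroup W] [NormedSpace ℝ W] [FiniteDimensional ℝ W]
    (A : W →ₗ[ℝ] V →ₗ[ℝ] ℝ) {u : ℝ → W} {q : ℝ → V} {u' : W} {q' : V} {t : ℝ}
    (hu : HasDerivAt u u' t) (hq : HasDerivAt q q' t)
    (h : ∀ s ψ, ⟪q s, ψ⟫ = A (u s) ψ) (ψ : V) :
    ⟪q', ψ⟫ = A u' ψ := by
  have hqψ : HasDerivAt (fun s => ⟪q s, ψ⟫) ⟪q', ψ⟫ t := by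
    simpa using hq.inner ℝ (hasDerivAt_const t ψ)
  have huψ : HasDerivAt (fun s => ⟪q s, ψ⟫) (A u' ψ) t := by
    simpa [h] using A.hasDerivAt_apply₂ hu (hasDerivAt_const t ψ)
  exact hqψ.unique huψ

theorem hasDerivAt_energy
    {V : Type*} [NormedAddCommGroup V] [InnerProductSpace ℝ V] [FiniteDimensional ℝ V]
    (b : V →ₗ[ℝ] V →ₗ[ℝ] ℝ) (hb_symm : ∀ x y : V, b x y = b y x)
    (F : V → ℝ) {g : V} {u q : ℝ → V} {u' q' : V} {t : ℝ}
    (hF : HasFDerivAt F (innerSL ℝ g) (u t))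
    (hu : HasDerivAt u u' t) (hq : HasDerivAt q q' t) :
    HasDerivAt (fun s => (1/2) * ‖q s‖^2 + F (u s) + (1/2) * b (u s) (u s))
      (⟪q t, q'⟫ + ⟪g, u'⟫ + b (u t) u') t := by
  have hb := (b.hasDerivAt_apply₂ hu hu).const_mul (1/2 : ℝ)
  rw [hb_symm u' (u t)] at hb
  refine (((hq.norm_sq.const_mul (1/2 : ℝ)).add (hF.comp_hasDerivAt t hu)).add hb).congr_deriv ?_
  rw [innerSL_apply_apply]
  ring

theorem stmt_0_general
    {V : Type*} [NormedAddCommGroup V] [InnerProductSpace ℝ V] [FiniteDimensional ℝ V]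
    (A : V →ₗ[ℝ] V →ₗ[ℝ] ℝ)
    (b : V →ₗ[ℝ] V →ₗ[ℝ] ℝ)
    (hb_symm : ∀ x y : V, b x y = b y x)
    (F : V → ℝ) (gradF : V → V)
    (hF : ∀ u : V, HasFDerivAt F (innerSL ℝ (gradF u)) u)
    (u q u' q' : ℝ → V)
    (hu : ∀ t : ℝ, HasDerivAt u (u' t) t)
    (hq : ∀ t : ℝ, HasDerivAt q (q' t) t)
    (heq1 : ∀ t : ℝ, ∀ φ : V,
      (inner ℝ (u' t) φ : ℝ) + b (u t) φ = -A φ (q t) - (inner ℝ (gradF (u t)) φ : ℝ))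
    (heq2 : ∀ t : ℝ, ∀ ψ : V, (inner ℝ (q t) ψ : ℝ) = A (u t) ψ) :
    ∀ t : ℝ,
      HasDerivAt (fun s : ℝ => (1/2) * ‖q s‖^2 + F (u s) + (1/2) * b (u s) (u s))
        (-‖u' t‖^2) t ∧ -‖u' t‖^2 ≤ 0 := by
  intro t
  have hq' : ⟪q' t, q t⟫ = A (u' t) (q t) :=
    inner_eq_of_hasDerivAt_of_forall_inner_eq A (hu t) (hq t) heq2 (q t)
  refine ⟨(hasDerivAt_energy b hb_symm F (hF (u t)) (hu t) (hq t)).congr_deriv ?_,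
    neg_nonpos.2 (sq_nonneg _)⟩
  have htest := heq1 t (u' t)
  rw [real_inner_self_eq_norm_sq] at htest
  linarith [real_inner_comm (q t) (q' t), real_inner_comm (u' t) (gradF (u t))]

/-- Semi-discrete energy dissipation (Theorem 2.1, abstract form). -/
theorem stmt_0
    {V : Type*} [NormedAddCommGroup V] [InnerProductSpace ℝ V] [FiniteDimensional ℝ V]
    (A : V →ₗ[ℝ] V →ₗ[ℝ] ℝ)
    (b : V →ₗ[ℝ] V →ₗ[ℝ] ℝ)
    (hb_symm : ∀ x y : V, b x y = b y x)
    (hb_pos : ∀ x : V, 0 ≤ b x x)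
    (F : V → ℝ) (gradF : V → V)
    (hF : ∀ u : V, HasFDerivAt F (innerSL ℝ (gradF u)) u)
    (u q u' q' : ℝ → V)
    (hu : ∀ t : ℝ, HasDerivAt u (u' t) t)
    (hq : ∀ t : ℝ, HasDerivAt q (q' t) t)
    (heq1 : ∀ t : ℝ, ∀ φ : V,
      (inner ℝ (u' t) φ : ℝ) + b (u t) φ = -A φ (q t) - (inner ℝ (gradF (u t)) φ : ℝ))
    (heq2 : ∀ t : ℝ, ∀ ψ : V, (inner ℝ (q t) ψ : ℝ) = A (u t) ψ) :
    ∀ t : ℝ,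
      HasDerivAt (fun s : ℝ => (1/2) * ‖q s‖^2 + F (u s) + (1/2) * b (u s) (u s))
        (-‖u' t‖^2) t ∧ -‖u' t‖^2 ≤ 0 :=
  stmt_0_general A b hb_symm F gradF hF u q u' q' hu hq heq1 heq2
end

section
/- Energy dissipation of the continuous-in-time IEQ-enlarged DG system (3.6): suppose u, q : ℝ → V and U : ℝ → H are differentiable, and for each t ∈ ℝ let T(t) : H → H be a self-adjoint bounded linear operator, such that for every t: U'(t) = (1/2) T(t) u'(t), and for all φ, ψ ∈ V: ⟨u'(t), φ⟩ + b(u(t), φ) = −A(φ, q(t)) − ⟨T(t) U(t), φ⟩ and ⟨q(t), ψ⟩ = A(u(t), ψ). Then t ↦ E(u(t), q(t), U(t)) is differentiable with derivative equal to −‖u'(t)‖² ≤ 0 at every t. -/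
/-!
The second equation says that `q = R u` for the Riesz representative `R` of `A`, so `q` is
differentiable with `⟪q', ψ⟫ = A(u', ψ)`. Differentiating the energy therefore gives
`A(u', q) + 2⟪U, U'⟫ + b(u, u')`; by self-adjointness `2⟪U, U'⟫ = ⟪T U, u'⟫`, and testing the
first equation with `φ = u'` turns the sum into `-‖u'‖²`.
-/

open InnerProductSpace

theorem LinearMap.hasDerivAt_apply_self {F : Type*} [NormedAddCommGroup F] [NormedSpace ℝ F]
    [FiniteDimensional ℝ F] (b : F →ₗ[ℝ] F →ₗ[ℝ] ℝ) {u : ℝ → F} {u' : F} {t : ℝ}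
    (hu : HasDerivAt u u' t) :
    HasDerivAt (fun s => b (u s) (u s)) (b (u t) u' + b u' (u t)) t := by
  simpa using b.toContinuousBilinearMap.hasDerivAt_of_bilinear (fun _ => hu) (fun _ => hu)

theorem exists_hasDerivAt_of_forall_inner_eq {E : Type*} [NormedAddCommGroup E]
    [InnerProductSpace ℝ E] [FiniteDimensional ℝ E] (A : E →ₗ[ℝ] E →ₗ[ℝ] ℝ)
    {u q : ℝ → E} {u' : E} {t : ℝ}
    (hq : ∀ s ψ, inner ℝ (q s) ψ = A (u s) ψ) (hu : HasDerivAt u u' t) :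
    ∃ q' : E, HasDerivAt q q' t ∧ ∀ ψ, inner ℝ q' ψ = A u' ψ := by
  set R : E →L[ℝ] E := continuousLinearMapOfBilin (𝕜 := ℝ) A.toContinuousBilinearMap
  have hR : ∀ x ψ, inner ℝ (R x) ψ = A x ψ := fun x ψ =>
    continuousLinearMapOfBilin_apply _ _ _
  have hqR : q = R ∘ u := funext fun s => ext_inner_right ℝ fun ψ => by simp [hq, hR]
  exact ⟨R u', hqR ▸ R.hasFDerivAt.comp_hasDerivAt t hu, hR u'⟩

theorem stmt_1_general
    {H : Type*} [NormedAddCommGroup H] [InnerProductSpace ℝ H]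
    (V : Submodule ℝ H) [FiniteDimensional ℝ V]
    (A : V →ₗ[ℝ] V →ₗ[ℝ] ℝ)
    (b : V →ₗ[ℝ] V →ₗ[ℝ] ℝ)
    (hb_symm : ∀ x y : V, b x y = b y x)
    (u q u' : ℝ → V) (U U' : ℝ → H)
    (T : ℝ → H →L[ℝ] H)
    (hT : ∀ t : ℝ, ∀ x y : H, (inner ℝ (T t x) y : ℝ) = (inner ℝ x (T t y) : ℝ))
    (hu : ∀ t : ℝ, HasDerivAt u (u' t) t)
    (hU : ∀ t : ℝ, HasDerivAt U (U' t) t)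
    (hUeq : ∀ t : ℝ, U' t = (1/2 : ℝ) • T t (u' t : H))
    (heq1 : ∀ t : ℝ, ∀ φ : V,
      (inner ℝ (u' t : H) (φ : H) : ℝ) + b (u t) φ
        = -A φ (q t) - (inner ℝ (T t (U t)) (φ : H) : ℝ))
    (heq2 : ∀ t : ℝ, ∀ ψ : V, (inner ℝ (q t : H) (ψ : H) : ℝ) = A (u t) ψ) :
    ∀ t : ℝ,
      HasDerivAt (fun s : ℝ => (1/2) * ‖q s‖^2 + ‖U s‖^2 + (1/2) * b (u s) (u s))
        (-‖u' t‖^2) t ∧ -‖u' t‖^2 ≤ 0 := by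
  intro t
  refine ⟨?_, neg_nonpos.mpr (by positivity)⟩
  obtain ⟨q't, hq, hq't⟩ := exists_hasDerivAt_of_forall_inner_eq A heq2 (hu t)
  refine (((hq.norm_sq.const_mul (1/2)).add (hU t).norm_sq).add
    ((b.hasDerivAt_apply_self (hu t)).const_mul (1/2))).congr_deriv ?_
  have hq_term : inner ℝ (q t) q't = A (u' t) (q t) := by rw [real_inner_comm, hq't]
  have hU_term : 2 * inner ℝ (U t) (U' t) = inner ℝ (T t (U t)) (u' t : H) := by
    rw [hUeq t, real_inner_smul_right, hT t]
    ring
  have hu'_norm : inner ℝ (u' t : H) (u' t : H) = ‖u' t‖ ^ 2 := real_inner_self_eq_norm_sq _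
  rw [hq_term, hU_term, hb_symm (u' t) (u t)]
  linarith [heq1 t (u' t)]

/-- Energy dissipation of the continuous-in-time IEQ-enlarged DG system (3.6). -/
theorem stmt_1
    {H : Type*} [NormedAddCommGroup H] [InnerProductSpace ℝ H] [CompleteSpace H]
    (V : Submodule ℝ H) [FiniteDimensional ℝ V]
    (A : V →ₗ[ℝ] V →ₗ[ℝ] ℝ)
    (b : V →ₗ[ℝ] V →ₗ[ℝ] ℝ)
    (hb_symm : ∀ x y : V, b x y = b y x)
    (hb_pos : ∀ x : V, 0 ≤ b x x)
    (u q u' q' : ℝ → V) (U U' : ℝ → H)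
    (T : ℝ → H →L[ℝ] H)
    (hT : ∀ t : ℝ, ∀ x y : H, (inner ℝ (T t x) y : ℝ) = (inner ℝ x (T t y) : ℝ))
    (hu : ∀ t : ℝ, HasDerivAt u (u' t) t)
    (hq : ∀ t : ℝ, HasDerivAt q (q' t) t)
    (hU : ∀ t : ℝ, HasDerivAt U (U' t) t)
    (hUeq : ∀ t : ℝ, U' t = (1/2 : ℝ) • T t (u' t : H))
    (heq1 : ∀ t : ℝ, ∀ φ : V,
      (inner ℝ (u' t : H) (φ : H) : ℝ) + b (u t) φ
        = -A φ (q t) - (inner ℝ (T t (U t)) (φ : H) : ℝ))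
    (heq2 : ∀ t : ℝ, ∀ ψ : V, (inner ℝ (q t : H) (ψ : H) : ℝ) = A (u t) ψ) :
    ∀ t : ℝ,
      HasDerivAt (fun s : ℝ => (1/2) * ‖q s‖^2 + ‖U s‖^2 + (1/2) * b (u s) (u s))
        (-‖u' t‖^2) t ∧ -‖u' t‖^2 ≤ 0 :=
  stmt_1_general V A b hb_symm u q u' U U' T hT hu hU hUeq heq1 heq2
end

section
/- A priori stability estimate for the first-order IEQ-DG linear system (from the proof of Theorem 3.1): let Δt > 0, let T : H → H be a self-adjoint bounded linear operator, and let f ∈ H. If u, q ∈ V satisfy, for all φ, ψ ∈ V, (1/Δt)⟨u, φ⟩ + (1/2)⟨T(T u), φ⟩ + b(u, φ) + A(φ, q) = ⟨f, φ⟩ and A(u, ψ) = ⟨q, ψ⟩, then ‖u‖² + 2Δt ‖q‖² + 2Δt b(u, u) ≤ Δt² ‖f‖². -/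
/- Testing the first equation with `φ = u` and the second with `ψ = q` turns `A u q` into `‖q‖²`
and gives the energy identity
`‖u‖² + Δt ‖q‖² + Δt b(u,u) + (Δt/2) ‖T u‖² = Δt ⟨f, u⟩`.
Dropping the nonnegative term `‖T u‖²` and absorbing `Δt ⟨f, u⟩ ≤ Δt ‖f‖ ‖u‖` by Young's
inequality `2 Δt ‖f‖ ‖u‖ ≤ Δt² ‖f‖² + ‖u‖²` yields the estimate. -/

open RealInnerProductSpace

lemma LinearMap.IsSymmetric.inner_map_map_self_nonneg {𝕜 E : Type*} [RCLike 𝕜]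
    [NormedAddCommGroup E] [InnerProductSpace 𝕜 E] {T : E →ₗ[𝕜] E} (hT : T.IsSymmetric)
    (x : E) : 0 ≤ RCLike.re (inner 𝕜 (T (T x)) x) := by
  rw [hT, inner_self_eq_norm_sq]
  positivity

lemma sq_add_two_mul_le_sq_of_sq_add_le_mul {x r c : ℝ} (h : x ^ 2 + r ≤ c * x) :
    x ^ 2 + 2 * r ≤ c ^ 2 := by
  nlinarith [sq_nonneg (c - x)]

theorem stmt_2_general
    {H : Type*} [NormedAddCommGroup H] [InnerProductSpace ℝ H]
    (V : Submodule ℝ H)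
    (A : V →ₗ[ℝ] V →ₗ[ℝ] ℝ)
    (b : V →ₗ[ℝ] V →ₗ[ℝ] ℝ)
    (Δt : ℝ) (hΔt : 0 < Δt)
    (T : H →L[ℝ] H)
    (hT : ∀ x y : H, (inner ℝ (T x) y : ℝ) = (inner ℝ x (T y) : ℝ))
    (f : H) (u q : V)
    (heq1 : ∀ φ : V,
      (1/Δt) * (inner ℝ (u : H) (φ : H) : ℝ) + (1/2) * (inner ℝ (T (T (u : H))) (φ : H) : ℝ)
        + b u φ + A φ q = (inner ℝ f (φ : H) : ℝ))
    (heq2 : ∀ ψ : V, A u ψ = (inner ℝ (q : H) (ψ : H) : ℝ)) :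
    ‖(u : H)‖^2 + 2 * Δt * ‖(q : H)‖^2 + 2 * Δt * b u u ≤ Δt^2 * ‖f‖^2 := by
  have hAuq : A u q = ‖(q : H)‖ ^ 2 := by rw [heq2, real_inner_self_eq_norm_sq]
  have hTT : 0 ≤ ⟪T (T u), u⟫ := LinearMap.IsSymmetric.inner_map_map_self_nonneg
    (T := (T : H →ₗ[ℝ] H)) hT u
  have energy : ‖(u : H)‖ ^ 2 + Δt * ‖(q : H)‖ ^ 2 + Δt * b u u + Δt / 2 * ⟪T (T u), u⟫
      = Δt * ⟪f, u⟫ := by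
    rw [← heq1 u, real_inner_self_eq_norm_sq, hAuq]
    field_simp
    ring
  have hfu : Δt * ⟪f, u⟫ ≤ Δt * (‖f‖ * ‖(u : H)‖) :=
    mul_le_mul_of_nonneg_left (real_inner_le_norm _ _) hΔt.le
  have key : ‖(u : H)‖ ^ 2 + (Δt * ‖(q : H)‖ ^ 2 + Δt * b u u) ≤ Δt * ‖f‖ * ‖(u : H)‖ := by
    linarith [mul_nonneg hΔt.le hTT]
  linarith [sq_add_two_mul_le_sq_of_sq_add_le_mul key]

/-- A priori stability estimate for the first-order IEQ-DG linear system
(from the proof of Theorem 3.1). -/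
theorem stmt_2
    {H : Type*} [NormedAddCommGroup H] [InnerProductSpace ℝ H] [CompleteSpace H]
    (V : Submodule ℝ H) [FiniteDimensional ℝ V]
    (A : V →ₗ[ℝ] V →ₗ[ℝ] ℝ)
    (b : V →ₗ[ℝ] V →ₗ[ℝ] ℝ)
    (hb_symm : ∀ x y : V, b x y = b y x)
    (hb_pos : ∀ x : V, 0 ≤ b x x)
    (Δt : ℝ) (hΔt : 0 < Δt)
    (T : H →L[ℝ] H)
    (hT : ∀ x y : H, (inner ℝ (T x) y : ℝ) = (inner ℝ x (T y) : ℝ))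
    (f : H) (u q : V)
    (heq1 : ∀ φ : V,
      (1/Δt) * (inner ℝ (u : H) (φ : H) : ℝ) + (1/2) * (inner ℝ (T (T (u : H))) (φ : H) : ℝ)
        + b u φ + A φ q = (inner ℝ f (φ : H) : ℝ))
    (heq2 : ∀ ψ : V, A u ψ = (inner ℝ (q : H) (ψ : H) : ℝ)) :
    ‖(u : H)‖^2 + 2 * Δt * ‖(q : H)‖^2 + 2 * Δt * b u u ≤ Δt^2 * ‖f‖^2 :=
  stmt_2_general V A b Δt hΔt T hT f u q heq1 heq2
end

section
/- Existence and uniqueness for the first-order IEQ-DG scheme (Theorem 3.1, solvability): let Δt > 0 and let T : H → H be a self-adjoint bounded linear operator. Then for every f ∈ H there exists a unique pair (u, q) ∈ V × V such that for all φ, ψ ∈ V: (1/Δt)⟨u, φ⟩ + (1/2)⟨T(T u), φ⟩ + b(u, φ) + A(φ, q) = ⟨f, φ⟩ and A(u, ψ) = ⟨q, ψ⟩. -/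
set_option maxHeartbeats 1000000

/-- Existence and uniqueness for the first-order IEQ-DG scheme
(Theorem 3.1, solvability). -/
theorem stmt_3
    {H : Type*} [NormedAddCommGroup H] [InnerProductSpace ℝ H] [CompleteSpace H]
    (V : Submodule ℝ H) [FiniteDimensional ℝ V]
    (A : V →ₗ[ℝ] V →ₗ[ℝ] ℝ)
    (b : V →ₗ[ℝ] V →ₗ[ℝ] ℝ)
    (hb_symm : ∀ x y : V, b x y = b y x)
    (hb_pos : ∀ x : V, 0 ≤ b x x)
    (Δt : ℝ) (hΔt : 0 < Δt)
    (T : H →L[ℝ] H)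
    (hT : ∀ x y : H, (inner ℝ (T x) y : ℝ) = (inner ℝ x (T y) : ℝ))
    (f : H) :
    ∃! uq : V × V,
      (∀ φ : V,
        (1/Δt) * (inner ℝ (uq.1 : H) (φ : H) : ℝ)
          + (1/2) * (inner ℝ (T (T (uq.1 : H))) (φ : H) : ℝ)
          + b uq.1 φ + A φ uq.2 = (inner ℝ f (φ : H) : ℝ))
      ∧ (∀ ψ : V, A uq.1 ψ = (inner ℝ (uq.2 : H) (ψ : H) : ℝ)) := by
  classical
  -- the bilinear form of the coupled system
  set B : (V × V) →ₗ[ℝ] Module.Dual ℝ (V × V) :=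
    LinearMap.mk₂ ℝ
      (fun p w =>
        (1/Δt) * (inner ℝ (p.1 : H) (w.1 : H) : ℝ)
          + (1/2) * (inner ℝ (T (T (p.1 : H))) (w.1 : H) : ℝ)
          + b p.1 w.1 + A w.1 p.2 + A p.1 w.2
          - (inner ℝ (p.2 : H) (w.2 : H) : ℝ))
      (by
        intro p p' w
        simp only [Prod.fst_add, Prod.snd_add, Submodule.coe_add, map_add,
          inner_add_left, LinearMap.add_apply]
        ring)
      (by
        intro c p w
        simp only [Prod.smul_fst, Prod.smul_snd, Submodule.coe_smul, map_smul,
          inner_smul_left, LinearMap.smul_apply, RCLike.star_def, conj_trivial,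
          smul_eq_mul]
        ring)
      (by
        intro p w w'
        simp only [Prod.fst_add, Prod.snd_add, Submodule.coe_add, map_add,
          inner_add_right, LinearMap.add_apply]
        ring)
      (by
        intro c p w
        simp only [Prod.smul_fst, Prod.smul_snd, Submodule.coe_smul, map_smul,
          inner_smul_right, LinearMap.smul_apply, smul_eq_mul]
        ring)
    with hB
  -- the right-hand side functional
  set F : Module.Dual ℝ (V × V) :=
    { toFun := fun w => (inner ℝ f (w.1 : H) : ℝ)
      map_add' := by intro w w'; simp [inner_add_right]
      map_smul' := by intro c w; simp [inner_smul_right] }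
    with hF
  have hFapp : ∀ w : V × V, F w = (inner ℝ f (w.1 : H) : ℝ) := fun w => rfl
  -- injectivity
  have hinj : Function.Injective B := by
    rw [← LinearMap.ker_eq_bot, LinearMap.ker_eq_bot']
    intro p hp
    have h1 := congrArg (fun g : Module.Dual ℝ (V × V) => g (p.1, 0)) hp
    have h2 := congrArg (fun g : Module.Dual ℝ (V × V) => g (0, p.2)) hp
    simp only [hB, LinearMap.mk₂_apply, LinearMap.zero_apply,
      Submodule.coe_zero, inner_zero_right, map_zero, LinearMap.zero_apply] at h1 h2
    -- h1 : (1/Δt)⟨u,u⟩ + (1/2)⟨TTu,u⟩ + b u u + A u q = 0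
    -- h2 : A u q - ⟨q,q⟩ = 0
    have hTT : (inner ℝ (T (T (p.1 : H))) (p.1 : H) : ℝ) = inner ℝ (T (p.1 : H)) (T (p.1 : H)) :=
      hT (T (p.1 : H)) (p.1 : H)
    have hAq : A p.1 p.2 = (inner ℝ (p.2 : H) (p.2 : H) : ℝ) := by linarith
    have key : (1/Δt) * (inner ℝ (p.1 : H) (p.1 : H) : ℝ)
        + (1/2) * (inner ℝ (T (p.1 : H)) (T (p.1 : H)) : ℝ)
        + b p.1 p.1 + (inner ℝ (p.2 : H) (p.2 : H) : ℝ) = 0 := by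
      rw [← hTT, ← hAq]; linarith
    have t1 : (0:ℝ) ≤ (inner ℝ (p.1 : H) (p.1 : H) : ℝ) := real_inner_self_nonneg
    have t2 : (0:ℝ) ≤ (inner ℝ (T (p.1 : H)) (T (p.1 : H)) : ℝ) := real_inner_self_nonneg
    have t3 : (0:ℝ) ≤ (inner ℝ (p.2 : H) (p.2 : H) : ℝ) := real_inner_self_nonneg
    have t4 : 0 ≤ b p.1 p.1 := hb_pos p.1
    have hdt : 0 < 1/Δt := by positivity
    have hu : (inner ℝ (p.1 : H) (p.1 : H) : ℝ) = 0 := by nlinarith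
    have hq : (inner ℝ (p.2 : H) (p.2 : H) : ℝ) = 0 := by nlinarith
    have hu0 : (p.1 : H) = 0 := by
      rwa [real_inner_self_eq_norm_sq, pow_eq_zero_iff (by norm_num), norm_eq_zero] at hu
    have hq0 : (p.2 : H) = 0 := by
      rwa [real_inner_self_eq_norm_sq, pow_eq_zero_iff (by norm_num), norm_eq_zero] at hq
    have : p.1 = 0 := Subtype.ext hu0
    have : p.2 = 0 := Subtype.ext hq0
    exact Prod.ext ‹p.1 = 0› this
  -- bijectivity via equal finrank
  have hrank : Module.finrank ℝ (V × V) = Module.finrank ℝ (Module.Dual ℝ (V × V)) :=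
    (Subspace.dual_finrank_eq).symm
  let e := B.linearEquivOfInjective hinj hrank
  have heapp : ∀ p, e p = B p := fun p => B.linearEquivOfInjective_apply hinj hrank p
  -- equivalence of the system with B p = F
  have hiff : ∀ p : V × V,
      ((∀ φ : V,
        (1/Δt) * (inner ℝ (p.1 : H) (φ : H) : ℝ)
          + (1/2) * (inner ℝ (T (T (p.1 : H))) (φ : H) : ℝ)
          + b p.1 φ + A φ p.2 = (inner ℝ f (φ : H) : ℝ))
      ∧ (∀ ψ : V, A p.1 ψ = (inner ℝ (p.2 : H) (ψ : H) : ℝ))) ↔ B p = F := by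
    intro p
    constructor
    · rintro ⟨h1, h2⟩
      apply LinearMap.ext
      intro w
      simp only [hB, LinearMap.mk₂_apply, hFapp]
      have := h1 w.1
      have := h2 w.2
      linarith
    · intro h
      constructor
      · intro φ
        have := congrArg (fun g : Module.Dual ℝ (V × V) => g (φ, 0)) h
        simp only [hB, LinearMap.mk₂_apply, hFapp, Submodule.coe_zero,
          inner_zero_right, map_zero, LinearMap.zero_apply] at this
        linarith
      · intro ψ
        have := congrArg (fun g : Module.Dual ℝ (V × V) => g (0, ψ)) h
        simp only [hB, LinearMap.mk₂_apply, hFapp, Submodule.coe_zero,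
          inner_zero_right, map_zero, LinearMap.zero_apply] at this
        linarith
  refine ⟨e.symm F, (hiff _).mpr ?_, ?_⟩
  · rw [← heapp, e.apply_symm_apply]
  · intro y hy
    have hy' : B y = F := (hiff y).mp hy
    have : e y = F := by rw [heapp, hy']
    calc y = e.symm (e y) := (e.symm_apply_apply y).symm
    _ = e.symm F := by rw [this]
end

section
/- Energy identity for one step of the first-order IEQ-DG scheme (identity (3.11) in the proof of Theorem 3.1): let Δt > 0, let T : H → H be a self-adjoint bounded linear operator, let u⁰, u¹, q⁰, q¹ ∈ V and U⁰ ∈ H, and set U¹ := U⁰ + (1/2) T (u¹ − u⁰). Suppose that for all φ, ψ ∈ V: ⟨(u¹ − u⁰)/Δt, φ⟩ + b(u¹, φ) = −A(φ, q¹) − ⟨T U¹, φ⟩, ⟨q⁰, ψ⟩ = A(u⁰, ψ) and ⟨q¹, ψ⟩ = A(u¹, ψ). Then E(u¹, q¹, U¹) = E(u⁰, q⁰, U⁰) − (1/Δt)‖u¹ − u⁰‖² − (1/2)‖q¹ − q⁰‖² − ‖U¹ − U⁰‖² − (1/2) b(u¹ − u⁰, u¹ − u⁰). -/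
/-!
Test the evolution equation with `φ = u¹ - u⁰`. The two relations defining `q⁰, q¹` turn
`A(u¹ - u⁰, q¹)` into `⟨q¹ - q⁰, q¹⟩`, and self-adjointness of `T` turns `⟨T U¹, u¹ - u⁰⟩` into
`2 ⟨U¹, U¹ - U⁰⟩`. Each of the three resulting pairings has the form `B(x, x - y)` for a symmetric
bilinear form `B`, and `2 B(x, x - y) = B(x, x) - B(y, y) + B(x - y, x - y)` splits it into an
energy difference plus a numerical dissipation term.
-/

theorem LinearMap.two_mul_apply_sub_eq_of_symm {R M : Type*} [CommRing R] [AddCommGroup M]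
    [Module R M] (B : M →ₗ[R] M →ₗ[R] R) (hB : ∀ x y, B x y = B y x) (x y : M) :
    2 * B x (x - y) = B x x - B y y + B (x - y) (x - y) := by
  simp only [map_sub, LinearMap.sub_apply]
  rw [hB y x]
  ring

theorem two_mul_real_inner_sub_eq {H : Type*} [NormedAddCommGroup H] [InnerProductSpace ℝ H]
    (x y : H) : 2 * inner ℝ x (x - y) = ‖x‖ ^ 2 - ‖y‖ ^ 2 + ‖x - y‖ ^ 2 := by
  simpa only [innerₗ_apply_apply, real_inner_self_eq_norm_sq] using
    (innerₗ H).two_mul_apply_sub_eq_of_symm (fun x y ↦ real_inner_comm y x) x y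

theorem stmt_4_general
    {H : Type*} [NormedAddCommGroup H] [InnerProductSpace ℝ H]
    (V : Submodule ℝ H)
    (A : V →ₗ[ℝ] V →ₗ[ℝ] ℝ)
    (b : V →ₗ[ℝ] V →ₗ[ℝ] ℝ)
    (hb_symm : ∀ x y : V, b x y = b y x)
    (E : V → V → H → ℝ)
    (hE : ∀ (u q : V) (U : H), E u q U = (1/2) * ‖(q : H)‖^2 + ‖U‖^2 + (1/2) * b u u)
    (Δt : ℝ)
    (T : H →L[ℝ] H)
    (hT : ∀ x y : H, (inner ℝ (T x) y : ℝ) = (inner ℝ x (T y) : ℝ))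
    (u₀ u₁ q₀ q₁ : V) (U₀ U₁ : H)
    (hU₁ : U₁ = U₀ + (1/2 : ℝ) • T ((u₁ : H) - (u₀ : H)))
    (heq1 : ∀ φ : V,
      (inner ℝ ((1/Δt) • ((u₁ : H) - (u₀ : H))) (φ : H) : ℝ) + b u₁ φ
        = -A φ q₁ - (inner ℝ (T U₁) (φ : H) : ℝ))
    (heq2 : ∀ ψ : V, (inner ℝ (q₀ : H) (ψ : H) : ℝ) = A u₀ ψ)
    (heq3 : ∀ ψ : V, (inner ℝ (q₁ : H) (ψ : H) : ℝ) = A u₁ ψ) :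
    E u₁ q₁ U₁ = E u₀ q₀ U₀ - (1/Δt) * ‖(u₁ : H) - (u₀ : H)‖^2
      - (1/2) * ‖(q₁ : H) - (q₀ : H)‖^2 - ‖U₁ - U₀‖^2
      - (1/2) * b (u₁ - u₀) (u₁ - u₀) := by
  have htest := heq1 (u₁ - u₀)
  have hA : A (u₁ - u₀) q₁ = inner ℝ (q₁ : H) ((q₁ : H) - q₀) := by
    rw [map_sub, LinearMap.sub_apply, ← heq3, ← heq2, ← inner_sub_left, real_inner_comm]
  have hTδ : T ((u₁ : H) - u₀) = (2 : ℝ) • (U₁ - U₀) := by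
    rw [hU₁, add_sub_cancel_left, smul_smul]
    norm_num
  have hTU : inner ℝ (T U₁) ((u₁ : H) - u₀) = 2 * inner ℝ U₁ (U₁ - U₀) := by
    rw [hT, hTδ, real_inner_smul_right]
  rw [Submodule.coe_sub, real_inner_smul_left, real_inner_self_eq_norm_sq, hA, hTU] at htest
  have hq := two_mul_real_inner_sub_eq (q₁ : H) q₀
  have hU := two_mul_real_inner_sub_eq U₁ U₀
  have hb := b.two_mul_apply_sub_eq_of_symm hb_symm u₁ u₀
  rw [hE, hE]
  linarith

/-- Energy identity for one step of the first-order IEQ-DG scheme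
(identity (3.11) in the proof of Theorem 3.1). -/
theorem stmt_4
    {H : Type*} [NormedAddCommGroup H] [InnerProductSpace ℝ H] [CompleteSpace H]
    (V : Submodule ℝ H) [FiniteDimensional ℝ V]
    (A : V →ₗ[ℝ] V →ₗ[ℝ] ℝ)
    (b : V →ₗ[ℝ] V →ₗ[ℝ] ℝ)
    (hb_symm : ∀ x y : V, b x y = b y x)
    (hb_pos : ∀ x : V, 0 ≤ b x x)
    (E : V → V → H → ℝ)
    (hE : ∀ (u q : V) (U : H), E u q U = (1/2) * ‖(q : H)‖^2 + ‖U‖^2 + (1/2) * b u u)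
    (Δt : ℝ) (hΔt : 0 < Δt)
    (T : H →L[ℝ] H)
    (hT : ∀ x y : H, (inner ℝ (T x) y : ℝ) = (inner ℝ x (T y) : ℝ))
    (u₀ u₁ q₀ q₁ : V) (U₀ U₁ : H)
    (hU₁ : U₁ = U₀ + (1/2 : ℝ) • T ((u₁ : H) - (u₀ : H)))
    (heq1 : ∀ φ : V,
      (inner ℝ ((1/Δt) • ((u₁ : H) - (u₀ : H))) (φ : H) : ℝ) + b u₁ φ
        = -A φ q₁ - (inner ℝ (T U₁) (φ : H) : ℝ))
    (heq2 : ∀ ψ : V, (inner ℝ (q₀ : H) (ψ : H) : ℝ) = A u₀ ψ)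
    (heq3 : ∀ ψ : V, (inner ℝ (q₁ : H) (ψ : H) : ℝ) = A u₁ ψ) :
    E u₁ q₁ U₁ = E u₀ q₀ U₀ - (1/Δt) * ‖(u₁ : H) - (u₀ : H)‖^2
      - (1/2) * ‖(q₁ : H) - (q₀ : H)‖^2 - ‖U₁ - U₀‖^2
      - (1/2) * b (u₁ - u₀) (u₁ - u₀) :=
  stmt_4_general V A b hb_symm E hE Δt T hT u₀ u₁ q₀ q₁ U₀ U₁ hU₁ heq1 heq2 heq3
end

section
/- Energy identity for one step of the second-order IEQ-DG scheme (identity (3.18) in the proof of Theorem 3.2): let Δt > 0, let T : H → H be a self-adjoint bounded linear operator, let u⁰, u¹, q⁰, q¹ ∈ V and U⁰ ∈ H, and set U¹ := U⁰ + (1/2) T (u¹ − u⁰). Suppose that for all φ, ψ ∈ V: ⟨(u¹ − u⁰)/Δt, φ⟩ + b((u⁰ + u¹)/2, φ) = −A(φ, (q⁰ + q¹)/2) − (1/2)⟨T (U¹ + U⁰), φ⟩, ⟨q⁰, ψ⟩ = A(u⁰, ψ) and ⟨q¹, ψ⟩ = A(u¹, ψ). Then E(u¹, q¹, U¹) = E(u⁰,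 q⁰, U⁰) − (1/Δt)‖u¹ − u⁰‖². -/
/-!
Test the first equation of the scheme with `φ = u¹ - u⁰`. Each term becomes a difference of
quadratic quantities: the `b`-term by symmetry of `b`; the `A`-term because the discrete
gradient equations turn `A(u¹ - u⁰, ·)` into `⟨q¹ - q⁰, ·⟩`; and the `T`-term because
self-adjointness moves `T` onto `u¹ - u⁰`, where the update rule gives `T(u¹ - u⁰) = 2 (U¹ - U⁰)`.
-/

open scoped RealInnerProductSpace

theorem LinearMap.apply_add_sub_of_symm {R M : Type*} [CommRing R] [AddCommGroup M] [Module R M]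
    (B : M →ₗ[R] M →ₗ[R] R) (hB : ∀ x y, B x y = B y x) (x y : M) :
    B (x + y) (y - x) = B y y - B x x := by
  simp only [map_add, map_sub, LinearMap.add_apply]
  rw [hB x y]
  ring

theorem real_inner_add_sub_eq_norm_sq_sub {F : Type*} [NormedAddCommGroup F]
    [InnerProductSpace ℝ F] (x y : F) : ⟪x + y, y - x⟫ = ‖y‖ ^ 2 - ‖x‖ ^ 2 := by
  simpa only [innerₗ_apply_apply, real_inner_self_eq_norm_sq] using
    (innerₗ F).apply_add_sub_of_symm (fun x y => real_inner_comm y x) x y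

theorem stmt_6_general
    {H : Type*} [NormedAddCommGroup H] [InnerProductSpace ℝ H]
    (V : Submodule ℝ H)
    (A : V →ₗ[ℝ] V →ₗ[ℝ] ℝ)
    (b : V →ₗ[ℝ] V →ₗ[ℝ] ℝ)
    (hb_symm : ∀ x y : V, b x y = b y x)
    (E : V → V → H → ℝ)
    (hE : ∀ (u q : V) (U : H), E u q U = (1/2) * ‖(q : H)‖^2 + ‖U‖^2 + (1/2) * b u u)
    (Δt : ℝ)
    (T : H →L[ℝ] H)
    (hT : ∀ x y : H, (inner ℝ (T x) y : ℝ) = (inner ℝ x (T y) : ℝ))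
    (u₀ u₁ q₀ q₁ : V) (U₀ U₁ : H)
    (hU₁ : U₁ = U₀ + (1/2 : ℝ) • T ((u₁ : H) - (u₀ : H)))
    (heq1 : ∀ φ : V,
      (inner ℝ ((1/Δt) • ((u₁ : H) - (u₀ : H))) (φ : H) : ℝ)
          + b ((1/2 : ℝ) • (u₀ + u₁)) φ
        = -A φ ((1/2 : ℝ) • (q₀ + q₁))
          - (1/2) * (inner ℝ (T (U₁ + U₀)) (φ : H) : ℝ))
    (heq2 : ∀ ψ : V, (inner ℝ (q₀ : H) (ψ : H) : ℝ) = A u₀ ψ)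
    (heq3 : ∀ ψ : V, (inner ℝ (q₁ : H) (ψ : H) : ℝ) = A u₁ ψ) :
    E u₁ q₁ U₁ = E u₀ q₀ U₀ - (1/Δt) * ‖(u₁ : H) - (u₀ : H)‖^2 := by
  have h_time : ⟪(1 / Δt) • ((u₁ : H) - u₀), ((u₁ - u₀ : V) : H)⟫
      = 1 / Δt * ‖(u₁ : H) - u₀‖ ^ 2 := by
    rw [Submodule.coe_sub, real_inner_smul_left, real_inner_self_eq_norm_sq]
  have h_penalty : b ((1 / 2 : ℝ) • (u₀ + u₁)) (u₁ - u₀) = 1 / 2 * (b u₁ u₁ - b u₀ u₀) := by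
    rw [map_smul, LinearMap.smul_apply, b.apply_add_sub_of_symm hb_symm, smul_eq_mul]
  have h_gradient : A (u₁ - u₀) ((1 / 2 : ℝ) • (q₀ + q₁))
      = 1 / 2 * (‖(q₁ : H)‖ ^ 2 - ‖(q₀ : H)‖ ^ 2) := by
    rw [map_sub, LinearMap.sub_apply, ← heq2, ← heq3, ← inner_sub_left, Submodule.coe_smul, real_inner_smul_right,
      real_inner_comm, Submodule.coe_add, real_inner_add_sub_eq_norm_sq_sub]
  have h_coupling : ⟪T (U₁ + U₀), ((u₁ - u₀ : V) : H)⟫ = 2 * (‖U₁‖ ^ 2 - ‖U₀‖ ^ 2) := by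
    have h_update : T ((u₁ : H) - u₀) = (2 : ℝ) • (U₁ - U₀) := by
      rw [hU₁]; module
    rw [hT, Submodule.coe_sub, h_update, real_inner_smul_right, add_comm,
      real_inner_add_sub_eq_norm_sq_sub]
  have h_tested := heq1 (u₁ - u₀)
  rw [h_time, h_penalty, h_gradient, h_coupling] at h_tested
  rw [hE, hE]
  linarith

/-- Energy identity for one step of the second-order IEQ-DG scheme
(identity (3.18) in the proof of Theorem 3.2). -/
theorem stmt_6
    {H : Type*} [NormedAddCommGroup H] [InnerProductSpace ℝ H] [CompleteSpace H]
    (V : Submodule ℝ H) [FiniteDimensional ℝ V]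
    (A : V →ₗ[ℝ] V →ₗ[ℝ] ℝ)
    (b : V →ₗ[ℝ] V →ₗ[ℝ] ℝ)
    (hb_symm : ∀ x y : V, b x y = b y x)
    (hb_pos : ∀ x : V, 0 ≤ b x x)
    (E : V → V → H → ℝ)
    (hE : ∀ (u q : V) (U : H), E u q U = (1/2) * ‖(q : H)‖^2 + ‖U‖^2 + (1/2) * b u u)
    (Δt : ℝ) (hΔt : 0 < Δt)
    (T : H →L[ℝ] H)
    (hT : ∀ x y : H, (inner ℝ (T x) y : ℝ) = (inner ℝ x (T y) : ℝ))
    (u₀ u₁ q₀ q₁ : V) (U₀ U₁ : H)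
    (hU₁ : U₁ = U₀ + (1/2 : ℝ) • T ((u₁ : H) - (u₀ : H)))
    (heq1 : ∀ φ : V,
      (inner ℝ ((1/Δt) • ((u₁ : H) - (u₀ : H))) (φ : H) : ℝ)
          + b ((1/2 : ℝ) • (u₀ + u₁)) φ
        = -A φ ((1/2 : ℝ) • (q₀ + q₁))
          - (1/2) * (inner ℝ (T (U₁ + U₀)) (φ : H) : ℝ))
    (heq2 : ∀ ψ : V, (inner ℝ (q₀ : H) (ψ : H) : ℝ) = A u₀ ψ)
    (heq3 : ∀ ψ : V, (inner ℝ (q₁ : H) (ψ : H) : ℝ) = A u₁ ψ) :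
    E u₁ q₁ U₁ = E u₀ q₀ U₀ - (1/Δt) * ‖(u₁ : H) - (u₀ : H)‖^2 :=
  stmt_6_general V A b hb_symm E hE Δt T hT u₀ u₁ q₀ q₁ U₀ U₁ hU₁ heq1 heq2 heq3
end

section
/- Existence and uniqueness for the second-order IEQ-DG scheme (Theorem 3.2, solvability of the linear system (3.19)): let Δt > 0 and let T : H → H be a self-adjoint bounded linear operator. Then for every f ∈ H there exists a unique pair (u, q) ∈ V × V such that for all φ, ψ ∈ V: (1/Δt)⟨u, φ⟩ + (1/4)⟨T(T u), φ⟩ + (1/2) A(φ, q) + (1/2) b(u, φ) = ⟨f, φ⟩ and A(u, ψ) = ⟨q, ψ⟩. -/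
/-!
Writing `a(u, φ) = (1/Δt)⟨u, φ⟩ + (1/4)⟨T(T u), φ⟩ + (1/2) b(u, φ)`, the system is a saddle point
problem `a(u, φ) + (1/2) A(φ, q) = ⟨f, φ⟩`, `A(u, ψ) = ⟨q, ψ⟩` on `V × V`, and `a` is positive
definite because `⟨T(T u), u⟩ = ‖T u‖²`. Testing the homogeneous system with `(u, 0)` and `(0, q)`
gives `a(u, u) + (1/2)‖q‖² = 0`, so `u = 0` and then `q = 0`. The system is square and
finite-dimensional, so uniqueness gives existence.
-/

open LinearMap
open scoped RealInnerProductSpace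

theorem LinearMap.SeparatingLeft.existsUnique_eq {K V : Type*} [Field K] [AddCommGroup V]
    [Module K V] [FiniteDimensional K V] {B : LinearMap.BilinForm K V} (hB : B.SeparatingLeft)
    (G : Module.Dual K V) : ∃! x, B x = G :=
  have hinj : Function.Injective B := LinearMap.ker_eq_bot.mp (separatingLeft_iff_ker_eq_bot.mp hB)
  Function.Bijective.existsUnique
    ⟨hinj, (injective_iff_surjective_of_finrank_eq_finrank Subspace.dual_finrank_eq.symm).mp hinj⟩ G

section SaddlePoint

variable {E : Type*} [NormedAddCommGroup E] [InnerProductSpace ℝ E]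

/-- The bilinear form of the system `a(u, φ) + c A(φ, q) = F φ`, `A(u, ψ) = ⟨q, ψ⟩`,
evaluated at the unknown `(u, q)` and the test pair `(φ, ψ)`. -/
noncomputable def saddleForm (a A : E →ₗ[ℝ] E →ₗ[ℝ] ℝ) (c : ℝ) : LinearMap.BilinForm ℝ (E × E) :=
  a.compl₁₂ (fst ℝ E E) (fst ℝ E E) + c • A.flip.compl₁₂ (snd ℝ E E) (fst ℝ E E)
    + A.compl₁₂ (fst ℝ E E) (snd ℝ E E) - (innerₗ E).compl₁₂ (snd ℝ E E) (snd ℝ E E)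

variable (a A : E →ₗ[ℝ] E →ₗ[ℝ] ℝ) (c : ℝ)

@[simp]
theorem saddleForm_apply (p r : E × E) :
    saddleForm a A c p r = a p.1 r.1 + c * A r.1 p.2 + A p.1 r.2 - ⟪p.2, r.2⟫ := by
  simp [saddleForm]

theorem separatingLeft_saddleForm (ha : ∀ u ≠ 0, 0 < a u u) (hc : 0 ≤ c) :
    (saddleForm a A c).SeparatingLeft := by
  rintro ⟨u, q⟩ hp
  have hu_test : a u u + c * A u q = 0 := by simpa using hp (u, 0)
  have hq_test : A u q = ⟪q, q⟫ := by simpa [sub_eq_zero] using hp (0, q)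
  have hu : u = 0 := by
    by_contra hu
    nlinarith [ha u hu, real_inner_self_nonneg (x := q)]
  have hq : q = 0 := by
    subst hu
    simpa using hq_test.symm
  rw [hu, hq, Prod.mk_zero_zero]

theorem saddleForm_eq_iff (F : Module.Dual ℝ E) (p : E × E) :
    saddleForm a A c p = F ∘ₗ fst ℝ E E ↔
      (∀ φ, a p.1 φ + c * A φ p.2 = F φ) ∧ ∀ ψ, A p.1 ψ = ⟪p.2, ψ⟫ := by
  constructor
  · intro h
    refine ⟨fun φ => by simpa using LinearMap.congr_fun h (φ, 0), fun ψ => ?_⟩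
    have := LinearMap.congr_fun h (0, ψ)
    simp only [saddleForm_apply, map_zero, LinearMap.zero_apply, mul_zero, zero_add, comp_apply,
      fst_apply] at this
    linarith
  · rintro ⟨h₁, h₂⟩
    refine LinearMap.ext fun r => ?_
    simp [← h₁ r.1, h₂ r.2]

theorem existsUnique_saddlePoint_solution [FiniteDimensional ℝ E] (ha : ∀ u ≠ 0, 0 < a u u)
    (hc : 0 ≤ c) (F : Module.Dual ℝ E) :
    ∃! p : E × E, (∀ φ, a p.1 φ + c * A φ p.2 = F φ) ∧ ∀ ψ, A p.1 ψ = ⟪p.2, ψ⟫ :=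
  (existsUnique_congr (saddleForm_eq_iff a A c F)).mp
    ((separatingLeft_saddleForm a A c ha hc).existsUnique_eq _)

end SaddlePoint

theorem stmt_8_general
    {H : Type*} [NormedAddCommGroup H] [InnerProductSpace ℝ H]
    (V : Submodule ℝ H) [FiniteDimensional ℝ V]
    (A : V →ₗ[ℝ] V →ₗ[ℝ] ℝ)
    (b : V →ₗ[ℝ] V →ₗ[ℝ] ℝ)
    (hb_pos : ∀ x : V, 0 ≤ b x x)
    (Δt : ℝ) (hΔt : 0 < Δt)
    (T : H →L[ℝ] H)
    (hT : ∀ x y : H, (inner ℝ (T x) y : ℝ) = (inner ℝ x (T y) : ℝ))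
    (f : H) :
    ∃! uq : V × V,
      (∀ φ : V,
        (1/Δt) * (inner ℝ (uq.1 : H) (φ : H) : ℝ)
          + (1/4) * (inner ℝ (T (T (uq.1 : H))) (φ : H) : ℝ)
          + (1/2) * A φ uq.2 + (1/2) * b uq.1 φ = (inner ℝ f (φ : H) : ℝ))
      ∧ (∀ ψ : V, A uq.1 ψ = (inner ℝ (uq.2 : H) (ψ : H) : ℝ)) := by
  let a : V →ₗ[ℝ] V →ₗ[ℝ] ℝ := (1/Δt : ℝ) • innerₗ V
    + (1/4 : ℝ) • (innerₗ H).compl₁₂ (T.toLinearMap ∘ₗ T.toLinearMap ∘ₗ V.subtype) V.subtype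
    + (1/2 : ℝ) • b
  have a_apply (u φ : V) :
      a u φ = (1/Δt) * ⟪(u : H), φ⟫ + (1/4) * ⟪T (T u), φ⟫ + (1/2) * b u φ := by
    simp [a]
  have ha : ∀ u ≠ 0, 0 < a u u := by
    intro u hu
    have hTu : ⟪T (T u), (u : H)⟫ = ⟪T u, T u⟫ := hT _ _
    have hu_pos : 0 < ⟪u, u⟫ := real_inner_self_pos.mpr hu
    have hTu_nonneg : 0 ≤ ⟪T u, T u⟫ := real_inner_self_nonneg
    have hbu : 0 ≤ b u u := hb_pos u
    rw [a_apply, hTu, ← Submodule.coe_inner]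
    positivity
  refine (existsUnique_congr fun uq => and_congr_left' (forall_congr' fun φ => ?_)).mp
    (existsUnique_saddlePoint_solution a A (1/2) ha (by norm_num) ((innerₗ H f) ∘ₗ V.subtype))
  rw [a_apply, add_right_comm]
  rfl

/-- Existence and uniqueness for the second-order IEQ-DG scheme
(Theorem 3.2, solvability of the linear system (3.19)). -/
theorem stmt_8
    {H : Type*} [NormedAddCommGroup H] [InnerProductSpace ℝ H] [CompleteSpace H]
    (V : Submodule ℝ H) [FiniteDimensional ℝ V]
    (A : V →ₗ[ℝ] V →ₗ[ℝ] ℝ)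
    (b : V →ₗ[ℝ] V →ₗ[ℝ] ℝ)
    (hb_symm : ∀ x y : V, b x y = b y x)
    (hb_pos : ∀ x : V, 0 ≤ b x x)
    (Δt : ℝ) (hΔt : 0 < Δt)
    (T : H →L[ℝ] H)
    (hT : ∀ x y : H, (inner ℝ (T x) y : ℝ) = (inner ℝ x (T y) : ℝ))
    (f : H) :
    ∃! uq : V × V,
      (∀ φ : V,
        (1/Δt) * (inner ℝ (uq.1 : H) (φ : H) : ℝ)
          + (1/4) * (inner ℝ (T (T (uq.1 : H))) (φ : H) : ℝ)
          + (1/2) * A φ uq.2 + (1/2) * b uq.1 φ = (inner ℝ f (φ : H) : ℝ))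
      ∧ (∀ ψ : V, A uq.1 ψ = (inner ℝ (uq.2 : H) (ψ : H) : ℝ)) :=
  stmt_8_general V A b hb_pos Δt hΔt T hT f
end

section
/- Energy dissipation of the nonlinear midpoint fully discrete DG scheme (identity (3.2) for scheme (3.1)): let Δt > 0, let u⁰, u¹, q⁰, q¹ ∈ V be such that Φ∘u⁰ and Φ∘u¹ are μ-integrable, and let w ∈ L²(μ) satisfy w·(u¹ − u⁰) = Φ∘u¹ − Φ∘u⁰ μ-almost everywhere (w is the difference quotient (Φ(u¹) − Φ(u⁰))/(u¹ − u⁰)). Suppose that for all φ, ψ ∈ V: ⟨(u¹ − u⁰)/Δt, φ⟩ = −A(φ, (q⁰ + q¹)/2) − ⟨w, φ⟩, ⟨q⁰, ψ⟩ = A(u⁰, ψ) and ⟨q¹, ψ⟩ = A(u¹, ψ). Then ∫_Ω Φ(u¹) dμ + (1/2)‖q¹‖² = ∫_Ω Φ(u⁰) dμ + (1/2)‖q⁰‖² − (1/Δt)‖u¹ − u⁰‖². -/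
open MeasureTheory

/-!
Test the first equation of the scheme with `φ = u¹ - u⁰`. The time-difference term becomes
`‖u¹ - u⁰‖² / Δt`; the difference-quotient term becomes `∫ Φ(u¹) - ∫ Φ(u⁰)`, because
`w (u¹ - u⁰) = Φ(u¹) - Φ(u⁰)` pointwise; and by the two auxiliary equations
`A(u¹ - u⁰, q⁰ + q¹) = ⟨q¹, q⁰ + q¹⟩ - ⟨q⁰, q⁰ + q¹⟩ = ‖q¹‖² - ‖q⁰‖²`.
-/

theorem apply_sub_add_eq_norm_sq_sub_norm_sq {E : Type*} [NormedAddCommGroup E]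
    [InnerProductSpace ℝ E] {V : Submodule ℝ E} (A : V →ₗ[ℝ] V →ₗ[ℝ] ℝ) {u₀ u₁ q₀ q₁ : V}
    (hq₀ : ∀ ψ : V, inner ℝ (q₀ : E) (ψ : E) = A u₀ ψ)
    (hq₁ : ∀ ψ : V, inner ℝ (q₁ : E) (ψ : E) = A u₁ ψ) :
    A (u₁ - u₀) (q₀ + q₁) = ‖(q₁ : E)‖ ^ 2 - ‖(q₀ : E)‖ ^ 2 := by
  simp only [map_sub, map_add, LinearMap.sub_apply, ← hq₀, ← hq₁,
    real_inner_self_eq_norm_sq, real_inner_comm (q₀ : E)]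
  ring

theorem MeasureTheory.L2.inner_eq_integral_of_ae_mul_eq {Ω : Type*} [MeasurableSpace Ω]
    {μ : Measure Ω} {w v : Lp ℝ 2 μ} {f : Ω → ℝ} (h : ∀ᵐ x ∂μ, w x * v x = f x) :
    inner ℝ w v = ∫ x, f x ∂μ := by
  rw [L2.inner_def]
  refine integral_congr_ae ?_
  filter_upwards [h] with x hx
  rw [← hx, real_inner_eq_re_inner, RCLike.inner_apply, conj_trivial, mul_comm]
  rfl

theorem stmt_9_general
    {Ω : Type*} [MeasurableSpace Ω] (μ : Measure Ω)
    (V : Submodule ℝ (Lp ℝ 2 μ))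
    (A : V →ₗ[ℝ] V →ₗ[ℝ] ℝ)
    (Φ : ℝ → ℝ)
    (Δt : ℝ)
    (u₀ u₁ q₀ q₁ : V)
    (hΦu₀ : Integrable (fun x => Φ ((u₀ : Lp ℝ 2 μ) x)) μ)
    (hΦu₁ : Integrable (fun x => Φ ((u₁ : Lp ℝ 2 μ) x)) μ)
    (w : Lp ℝ 2 μ)
    (hw : ∀ᵐ x ∂μ,
      w x * ((u₁ : Lp ℝ 2 μ) x - (u₀ : Lp ℝ 2 μ) x)
        = Φ ((u₁ : Lp ℝ 2 μ) x) - Φ ((u₀ : Lp ℝ 2 μ) x))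
    (heq1 : ∀ φ : V,
      (inner ℝ ((1/Δt) • ((u₁ : Lp ℝ 2 μ) - (u₀ : Lp ℝ 2 μ))) (φ : Lp ℝ 2 μ) : ℝ)
        = -A φ ((1/2 : ℝ) • (q₀ + q₁)) - (inner ℝ w (φ : Lp ℝ 2 μ) : ℝ))
    (heq2 : ∀ ψ : V, (inner ℝ (q₀ : Lp ℝ 2 μ) (ψ : Lp ℝ 2 μ) : ℝ) = A u₀ ψ)
    (heq3 : ∀ ψ : V, (inner ℝ (q₁ : Lp ℝ 2 μ) (ψ : Lp ℝ 2 μ) : ℝ) = A u₁ ψ) :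
    (∫ x, Φ ((u₁ : Lp ℝ 2 μ) x) ∂μ) + (1/2) * ‖(q₁ : Lp ℝ 2 μ)‖^2
      = (∫ x, Φ ((u₀ : Lp ℝ 2 μ) x) ∂μ) + (1/2) * ‖(q₀ : Lp ℝ 2 μ)‖^2
        - (1/Δt) * ‖(u₁ : Lp ℝ 2 μ) - (u₀ : Lp ℝ 2 μ)‖^2 := by
  have htest := heq1 (u₁ - u₀)
  have hA := apply_sub_add_eq_norm_sq_sub_norm_sq A heq2 heq3
  have hw' : inner ℝ w ((u₁ : Lp ℝ 2 μ) - u₀)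
      = ∫ x, Φ ((u₁ : Lp ℝ 2 μ) x) - Φ ((u₀ : Lp ℝ 2 μ) x) ∂μ := by
    refine L2.inner_eq_integral_of_ae_mul_eq ?_
    filter_upwards [hw, Lp.coeFn_sub (u₁ : Lp ℝ 2 μ) u₀] with x hx hsub
    rw [hsub, Pi.sub_apply, hx]
  rw [Submodule.coe_sub, real_inner_smul_left, real_inner_self_eq_norm_sq, map_smul, smul_eq_mul,
    hA, hw', integral_sub hΦu₁ hΦu₀] at htest
  linarith

/-- Energy dissipation of the nonlinear midpoint fully discrete DG scheme
(identity (3.2) for scheme (3.1)). -/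
theorem stmt_9
    {Ω : Type*} [MeasurableSpace Ω] (μ : Measure Ω)
    (V : Submodule ℝ (Lp ℝ 2 μ)) [FiniteDimensional ℝ V]
    (A : V →ₗ[ℝ] V →ₗ[ℝ] ℝ)
    (Φ : ℝ → ℝ)
    (Δt : ℝ) (hΔt : 0 < Δt)
    (u₀ u₁ q₀ q₁ : V)
    (hΦu₀ : Integrable (fun x => Φ ((u₀ : Lp ℝ 2 μ) x)) μ)
    (hΦu₁ : Integrable (fun x => Φ ((u₁ : Lp ℝ 2 μ) x)) μ)
    (w : Lp ℝ 2 μ)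
    (hw : ∀ᵐ x ∂μ,
      w x * ((u₁ : Lp ℝ 2 μ) x - (u₀ : Lp ℝ 2 μ) x)
        = Φ ((u₁ : Lp ℝ 2 μ) x) - Φ ((u₀ : Lp ℝ 2 μ) x))
    (heq1 : ∀ φ : V,
      (inner ℝ ((1/Δt) • ((u₁ : Lp ℝ 2 μ) - (u₀ : Lp ℝ 2 μ))) (φ : Lp ℝ 2 μ) : ℝ)
        = -A φ ((1/2 : ℝ) • (q₀ + q₁)) - (inner ℝ w (φ : Lp ℝ 2 μ) : ℝ))
    (heq2 : ∀ ψ : V, (inner ℝ (q₀ : Lp ℝ 2 μ) (ψ : Lp ℝ 2 μ) : ℝ) = A u₀ ψ)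
    (heq3 : ∀ ψ : V, (inner ℝ (q₁ : Lp ℝ 2 μ) (ψ : Lp ℝ 2 μ) : ℝ) = A u₁ ψ) :
    (∫ x, Φ ((u₁ : Lp ℝ 2 μ) x) ∂μ) + (1/2) * ‖(q₁ : Lp ℝ 2 μ)‖^2
      = (∫ x, Φ ((u₀ : Lp ℝ 2 μ) x) ∂μ) + (1/2) * ‖(q₀ : Lp ℝ 2 μ)‖^2
        - (1/Δt) * ‖(u₁ : Lp ℝ 2 μ) - (u₀ : Lp ℝ 2 μ)‖^2 :=
  stmt_9_general μ V A Φ Δt u₀ u₁ q₀ q₁ hΦu₀ hΦu₁ w hw heq1 heq2 heq3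
end

section
/- Monotone decay of the discrete energy along trajectories of the first-order IEQ-DG scheme (Theorem 3.1, trajectory form): let Δt > 0, let P : H → V be the orthogonal projection onto V, and for each n ∈ ℕ let Tₙ : H → H be a self-adjoint bounded linear operator. Let (uₙ) and (qₙ) be sequences in V and (Uₙ) a sequence in H such that for every n ∈ ℕ: U_{n+1} = P Uₙ + (1/2) Tₙ (u_{n+1} − uₙ), and for all φ, ψ ∈ V: ⟨(u_{n+1} − uₙ)/Δt, φ⟩ + b(u_{n+1}, φ) = −A(φ, q_{n+1}) − ⟨Tₙ U_{n+1}, φ⟩ and ⟨qₙ, ψ⟩ = A(uₙ, ψ). Then for every n ∈ ℕ: E(u_{n+1}, q_{n+1}, P U_{n+1}) ≤ E(uₙ, qₙ, P Uₙ) − (1/Δt)‖u_{n+1} − uₙ‖² − (1/2)‖q_{n+1} − qₙ‖² − ‖U_{n+1} − P Uₙ‖² − (1/2) b(u_{n+1} − uₙ, u_{n+1} − uₙ); in particular the sequence of discrete energies Eⁿ := E(uₙ, qₙ, P Uₙ) is nonincreasing in n, independent of the size of Δt. -/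
/-!
Testing the `u`-equation with `φ = u_{n+1} - u_n` and rewriting the `A`-term by the `q`-equation and
the `T`-term by self-adjointness of `Tₙ` and the `U`-update, every term becomes of the form
`2 ⟨a, a - b⟩ = ‖a‖² - ‖b‖² + ‖a - b‖²` (for the inner product or for `b`). This gives an exact
energy identity with the unprojected `U_{n+1}`, and projecting onto `V` only decreases its norm.
-/

open scoped InnerProductSpace

theorem LinearMap.two_mul_apply_self_sub {R M : Type*} [CommRing R] [AddCommGroup M] [Module R M]
    (b : M →ₗ[R] M →ₗ[R] R) (hb : ∀ x y, b x y = b y x) (x y : M) :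
    2 * b x (x - y) = b x x - b y y + b (x - y) (x - y) := by
  simp only [map_sub, sub_apply]
  rw [hb y x]
  ring

theorem real_two_mul_inner_self_sub {F : Type*} [NormedAddCommGroup F] [InnerProductSpace ℝ F]
    (x y : F) : 2 * ⟪x, x - y⟫_ℝ = ‖x‖ ^ 2 - ‖y‖ ^ 2 + ‖x - y‖ ^ 2 := by
  simpa only [innerₗ_apply_apply, real_inner_self_eq_norm_sq] using
    (innerₗ F).two_mul_apply_self_sub (fun _ _ => real_inner_comm _ _) x y

section

variable {H : Type*} [NormedAddCommGroup H] [InnerProductSpace ℝ H] {V : Submodule ℝ H}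

noncomputable def ieqEnergy (b : V →ₗ[ℝ] V →ₗ[ℝ] ℝ) (u q : V) (U : H) : ℝ :=
  (1/2) * ‖(q : H)‖ ^ 2 + ‖U‖ ^ 2 + (1/2) * b u u

theorem ieqEnergy_orthogonalProjectionOnto_le [V.HasOrthogonalProjection]
    (b : V →ₗ[ℝ] V →ₗ[ℝ] ℝ) (u q : V) (U : H) :
    ieqEnergy b u q (V.orthogonalProjectionOnto U) ≤ ieqEnergy b u q U := by
  unfold ieqEnergy
  gcongr
  exact V.norm_orthogonalProjectionOnto_apply_le U

theorem ieqEnergy_step_eq (A b : V →ₗ[ℝ] V →ₗ[ℝ] ℝ) (hb : ∀ x y, b x y = b y x) {Δt : ℝ}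
    {T : H →L[ℝ] H} (hT : (T : H →ₗ[ℝ] H).IsSymmetric) {u₀ u₁ q₀ q₁ : V} {W U₁ : H}
    (hU₁ : U₁ = W + (1/2 : ℝ) • T ((u₁ : H) - u₀))
    (hu : ∀ φ : V, ⟪(1/Δt) • ((u₁ : H) - u₀), φ⟫_ℝ + b u₁ φ = -A φ q₁ - ⟪T U₁, φ⟫_ℝ)
    (hq₀ : ∀ ψ : V, ⟪(q₀ : H), ψ⟫_ℝ = A u₀ ψ) (hq₁ : ∀ ψ : V, ⟪(q₁ : H), ψ⟫_ℝ = A u₁ ψ) :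
    ieqEnergy b u₁ q₁ U₁ + (1/Δt) * ‖(u₁ : H) - u₀‖ ^ 2 + (1/2) * ‖(q₁ : H) - q₀‖ ^ 2
        + ‖U₁ - W‖ ^ 2 + (1/2) * b (u₁ - u₀) (u₁ - u₀) = ieqEnergy b u₀ q₀ W := by
  have hA : A (u₁ - u₀) q₁ = ⟪(q₁ : H), q₁ - q₀⟫_ℝ := by
    rw [real_inner_comm, inner_sub_left, hq₁, hq₀, map_sub, LinearMap.sub_apply]
  have hTd : T ((u₁ : H) - u₀) = (2 : ℝ) • (U₁ - W) := by
    rw [hU₁, add_sub_cancel_left, smul_smul]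
    norm_num
  have hTU : ⟪T U₁, (u₁ : H) - u₀⟫_ℝ = 2 * ⟪U₁, U₁ - W⟫_ℝ := by
    calc ⟪T U₁, (u₁ : H) - u₀⟫_ℝ = ⟪U₁, T ((u₁ : H) - u₀)⟫_ℝ := hT U₁ _
      _ = 2 * ⟪U₁, U₁ - W⟫_ℝ := by rw [hTd, real_inner_smul_right]
  have hu' := hu (u₁ - u₀)
  rw [Submodule.coe_sub, real_inner_smul_left, real_inner_self_eq_norm_sq, hA, hTU] at hu'
  have hq := real_two_mul_inner_self_sub (q₁ : H) q₀
  have hU := real_two_mul_inner_self_sub U₁ W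
  have hbu := b.two_mul_apply_self_sub hb u₁ u₀
  unfold ieqEnergy
  linarith

end

theorem stmt_12_general
    {H : Type*} [NormedAddCommGroup H] [InnerProductSpace ℝ H]
    (V : Submodule ℝ H) [FiniteDimensional ℝ V]
    (A : V →ₗ[ℝ] V →ₗ[ℝ] ℝ)
    (b : V →ₗ[ℝ] V →ₗ[ℝ] ℝ)
    (hb_symm : ∀ x y : V, b x y = b y x)
    (hb_pos : ∀ x : V, 0 ≤ b x x)
    (E : V → V → H → ℝ)
    (hE : ∀ (u q : V) (U : H), E u q U = (1/2) * ‖(q : H)‖^2 + ‖U‖^2 + (1/2) * b u u)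
    (Δt : ℝ) (hΔt : 0 < Δt)
    (T : ℕ → H →L[ℝ] H)
    (hT : ∀ n : ℕ, ∀ x y : H, (inner ℝ (T n x) y : ℝ) = (inner ℝ x (T n y) : ℝ))
    (u q : ℕ → V) (U : ℕ → H)
    (hU : ∀ n : ℕ,
      U (n+1) = ((Submodule.orthogonalProjectionOnto V (U n) : V) : H)
        + (1/2 : ℝ) • T n ((u (n+1) : H) - (u n : H)))
    (heq1 : ∀ n : ℕ, ∀ φ : V,
      (inner ℝ ((1/Δt) • ((u (n+1) : H) - (u n : H))) (φ : H) : ℝ) + b (u (n+1)) φ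
        = -A φ (q (n+1)) - (inner ℝ (T n (U (n+1))) (φ : H) : ℝ))
    (heq2 : ∀ n : ℕ, ∀ ψ : V, (inner ℝ (q n : H) (ψ : H) : ℝ) = A (u n) ψ) :
    (∀ n : ℕ,
      E (u (n+1)) (q (n+1)) ((Submodule.orthogonalProjectionOnto V (U (n+1)) : V) : H)
        ≤ E (u n) (q n) ((Submodule.orthogonalProjectionOnto V (U n) : V) : H)
          - (1/Δt) * ‖(u (n+1) : H) - (u n : H)‖^2
          - (1/2) * ‖(q (n+1) : H) - (q n : H)‖^2
          - ‖U (n+1) - ((Submodule.orthogonalProjectionOnto V (U n) : V) : H)‖^2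
          - (1/2) * b (u (n+1) - u n) (u (n+1) - u n))
    ∧ Antitone (fun n : ℕ =>
        E (u n) (q n) ((Submodule.orthogonalProjectionOnto V (U n) : V) : H)) := by
  obtain rfl : E = ieqEnergy b := funext fun u => funext fun q => funext fun U => hE u q U
  have step := fun n : ℕ =>
    ieqEnergy_step_eq A b hb_symm (hT n) (hU n) (heq1 n) (heq2 n) (heq2 (n+1))
  have proj := fun n : ℕ => ieqEnergy_orthogonalProjectionOnto_le b (u (n+1)) (q (n+1)) (U (n+1))
  refine ⟨fun n => by linarith [step n, proj n], antitone_nat_of_succ_le fun n => ?_⟩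
  have : 0 ≤ (1/Δt) * ‖(u (n+1) : H) - (u n : H)‖ ^ 2 := by positivity
  linarith [step n, proj n, hb_pos (u (n+1) - u n), sq_nonneg ‖(q (n+1) : H) - (q n : H)‖,
    sq_nonneg ‖U (n+1) - ((Submodule.orthogonalProjectionOnto V (U n) : V) : H)‖]

/-- Monotone decay of the discrete energy along trajectories of the first-order
IEQ-DG scheme (Theorem 3.1, trajectory form). -/
theorem stmt_12
    {H : Type*} [NormedAddCommGroup H] [InnerProductSpace ℝ H] [CompleteSpace H]
    (V : Submodule ℝ H) [FiniteDimensional ℝ V]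
    (A : V →ₗ[ℝ] V →ₗ[ℝ] ℝ)
    (b : V →ₗ[ℝ] V →ₗ[ℝ] ℝ)
    (hb_symm : ∀ x y : V, b x y = b y x)
    (hb_pos : ∀ x : V, 0 ≤ b x x)
    (E : V → V → H → ℝ)
    (hE : ∀ (u q : V) (U : H), E u q U = (1/2) * ‖(q : H)‖^2 + ‖U‖^2 + (1/2) * b u u)
    (Δt : ℝ) (hΔt : 0 < Δt)
    (T : ℕ → H →L[ℝ] H)
    (hT : ∀ n : ℕ, ∀ x y : H, (inner ℝ (T n x) y : ℝ) = (inner ℝ x (T n y) : ℝ))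
    (u q : ℕ → V) (U : ℕ → H)
    (hU : ∀ n : ℕ,
      U (n+1) = ((Submodule.orthogonalProjectionOnto V (U n) : V) : H)
        + (1/2 : ℝ) • T n ((u (n+1) : H) - (u n : H)))
    (heq1 : ∀ n : ℕ, ∀ φ : V,
      (inner ℝ ((1/Δt) • ((u (n+1) : H) - (u n : H))) (φ : H) : ℝ) + b (u (n+1)) φ
        = -A φ (q (n+1)) - (inner ℝ (T n (U (n+1))) (φ : H) : ℝ))
    (heq2 : ∀ n : ℕ, ∀ ψ : V, (inner ℝ (q n : H) (ψ : H) : ℝ) = A (u n) ψ) :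
    (∀ n : ℕ,
      E (u (n+1)) (q (n+1)) ((Submodule.orthogonalProjectionOnto V (U (n+1)) : V) : H)
        ≤ E (u n) (q n) ((Submodule.orthogonalProjectionOnto V (U n) : V) : H)
          - (1/Δt) * ‖(u (n+1) : H) - (u n : H)‖^2
          - (1/2) * ‖(q (n+1) : H) - (q n : H)‖^2
          - ‖U (n+1) - ((Submodule.orthogonalProjectionOnto V (U n) : V) : H)‖^2
          - (1/2) * b (u (n+1) - u n) (u (n+1) - u n))
    ∧ Antitone (fun n : ℕ =>
        E (u n) (q n) ((Submodule.orthogonalProjectionOnto V (U n) : V) : H)) :=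
  stmt_12_general V A b hb_symm hb_pos E hE Δt hΔt T hT u q U hU heq1 heq2
end
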